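/- The map sending each hereditarily finite set to its ordered snake is injective: two hereditarily finite sets with the same ordered snake representation are equal. -/

import Mathlib

inductive AB | a | b
deriving DecidableEq

/-- The strict ordering on the alphabet: `a < b`. -/
def abLT : AB → AB → Prop := fun x y => x = AB.a ∧ y = AB.b

/-- Lexicographic strict order `≪` on strings over `{a,b}`. -/
def lexLT : List AB → List AB → Prop := List.Lex abLT

/-- The graph of the map sending a hereditarily finite set to its ordered snake
(snakes identified with strings in Polish notation over `{a,b}`):
`∅` is sent to the string `a`; a set `{S₁,…,Sₖ}` with the `Sᵢ` pairwise distinct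
and their ordered snakes listed in strictly increasing lexicographic order
`β₁ ≪ … ≪ βₖ` is sent to `bᵏa β₁ … βₖ`. -/
inductive OSnake : ZFSet → List AB → Prop
  | empty : OSnake ∅ [AB.a]
  | insert (l : List ZFSet) (βs : List (List AB)) :
      l ≠ [] →
      l.Pairwise (· ≠ ·) →
      List.Forall₂ OSnake l βs →
      βs.Chain' lexLT →
      OSnake (l.foldr (insert : ZFSet → ZFSet → ZFSet) ∅)
        (List.replicate l.length AB.b ++ [AB.a] ++ βs.flatten)

/-!
Weigh `a` as `+1` and `b` as `-1`. As for any word in Polish notation, every snake has weight `1`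
while each of its proper prefixes has weight `≤ 0`. So no snake is a proper prefix of another,
a concatenation of snakes splits into its factors in only one way, and the snake `bᵏa β₁ … βₖ`
of a set determines the snakes `βᵢ` of its elements. Induction on the snake then recovers the set.
-/

theorem List.prefix_append_iff {α : Type*} {p x y : List α} :
    p <+: x ++ y ↔ p <+: x ∨ ∃ q, p = x ++ q ∧ q <+: y := by
  constructor
  · rintro ⟨t, ht⟩
    rcases List.append_eq_append_iff.1 ht with ⟨r, rfl, -⟩ | ⟨q, rfl, rfl⟩
    · exact Or.inl (List.prefix_append _ _)
    · exact Or.inr ⟨q, rfl, List.prefix_append _ _⟩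
  · rintro (h | ⟨q, rfl, hq⟩)
    · exact h.trans (List.prefix_append _ _)
    · exact (List.prefix_append_right_inj x).2 hq

theorem List.replicate_append_cons_inj {α : Type*} {x y : α} (hxy : x ≠ y) {k k' : ℕ}
    {u v : List α} (h : List.replicate k x ++ y :: u = List.replicate k' x ++ y :: v) :
    k = k' ∧ u = v := by
  induction k generalizing k' with
  | zero => cases k' <;> simp_all [List.replicate_succ, eq_comm]
  | succ k ih => cases k' <;> simp_all [List.replicate_succ]

theorem List.Forall₂.forall_mem_right {α β : Type*} {R : α → β → Prop} {Q : β → Prop}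
    {l : List α} {bs : List β} (h : List.Forall₂ R l bs) (hQ : ∀ a b, R a b → Q b) :
    ∀ b ∈ bs, Q b := by
  induction h with
  | nil => simp
  | cons hab _ ih => exact List.forall_mem_cons.2 ⟨hQ _ _ hab, ih⟩

theorem List.Forall₂.eq_of_unique_left {α β : Type*} {R : α → β → Prop} {l l' : List α}
    {bs : List β} (h : List.Forall₂ (fun a b => ∀ a', R a' b → a = a') l bs)
    (h' : List.Forall₂ R l' bs) : l = l' := by
  induction h generalizing l' with
  | nil => exact (List.forall₂_nil_right_iff.1 h').symm
  | cons hab _ ih =>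
    cases h' with
    | cons hab' htail => rw [hab _ hab', ih htail]

def excess (w : List AB) : ℤ := w.count AB.a - w.count AB.b

@[simp]
theorem excess_nil : excess [] = 0 := rfl

@[simp]
theorem excess_append (u v : List AB) : excess (u ++ v) = excess u + excess v := by
  simp only [excess, List.count_append]
  push_cast
  ring

@[simp]
theorem excess_cons_a (w : List AB) : excess (AB.a :: w) = excess w + 1 := by
  simp only [excess, List.count_cons_self, List.count_cons_of_ne (by decide : AB.a ≠ AB.b)]
  push_cast
  ring

@[simp]
theorem excess_replicate_b (k : ℕ) : excess (List.replicate k AB.b) = -k := by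
  simp [excess, List.count_replicate]

def IsPolishWord (w : List AB) : Prop :=
  excess w = 1 ∧ ∀ p, p <+: w → p ≠ w → excess p ≤ 0

namespace IsPolishWord

theorem ne_nil {w : List AB} (hw : IsPolishWord w) : w ≠ [] := by
  rintro rfl
  simp [IsPolishWord] at hw

theorem eq_of_prefix {u v : List AB} (hu : IsPolishWord u) (hv : IsPolishWord v)
    (h : u <+: v) : u = v := by
  by_contra hne
  have := hv.2 u h hne
  have := hu.1
  omega

theorem flatten_injective {ws vs : List (List AB)} (hws : ∀ w ∈ ws, IsPolishWord w)
    (hvs : ∀ v ∈ vs, IsPolishWord v) (h : ws.flatten = vs.flatten) : ws = vs := by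
  induction ws generalizing vs with
  | nil =>
    cases vs with
    | nil => rfl
    | cons v vs => simp_all [(hvs v List.mem_cons_self).ne_nil]
  | cons w ws ih =>
    cases vs with
    | nil => simp_all [(hws w List.mem_cons_self).ne_nil]
    | cons v vs =>
      rw [List.forall_mem_cons] at hws hvs
      rw [List.flatten_cons, List.flatten_cons] at h
      have hwv : w = v := by
        rcases List.prefix_or_prefix_of_prefix (h ▸ List.prefix_append w _)
            (List.prefix_append v _) with hp | hp
        · exact hws.1.eq_of_prefix hvs.1 hp
        · exact (hvs.1.eq_of_prefix hws.1 hp).symm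
      subst hwv
      rw [ih hws.2 hvs.2 (List.append_cancel_left h)]

theorem excess_flatten {ws : List (List AB)} (hws : ∀ w ∈ ws, IsPolishWord w) :
    excess ws.flatten = ws.length := by
  induction ws with
  | nil => rfl
  | cons w ws ih =>
    rw [List.forall_mem_cons] at hws
    simp [hws.1.1, ih hws.2, add_comm]

theorem excess_lt_of_prefix_flatten {ws : List (List AB)} (hws : ∀ w ∈ ws, IsPolishWord w)
    {q : List AB} (hq : q <+: ws.flatten) (hne : q ≠ ws.flatten) : excess q < ws.length := by
  induction ws generalizing q with
  | nil => exact absurd (List.prefix_nil.1 hq) hne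
  | cons w ws ih =>
    rw [List.forall_mem_cons] at hws
    rw [List.flatten_cons, List.prefix_append_iff] at hq
    rcases hq with hq | ⟨q, rfl, hq⟩
    · by_cases hqw : q = w
      · subst hqw
        cases ws with
        | nil => simp at hne
        | cons => simp [hws.1.1]
      · have := hws.1.2 q hq hqw
        simp only [List.length_cons]
        omega
    · have := ih hws.2 hq (by rintro rfl; simp at hne)
      simp only [excess_append, hws.1.1, List.length_cons]
      omega

theorem replicate_append_flatten {ws : List (List AB)} (hws : ∀ w ∈ ws, IsPolishWord w) :
    IsPolishWord (List.replicate ws.length AB.b ++ [AB.a] ++ ws.flatten) := by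
  refine ⟨by simp [excess_flatten hws], fun p hp hne => ?_⟩
  rw [List.append_assoc, List.prefix_append_iff] at hp
  rcases hp with hp | ⟨q, rfl, hq⟩
  · rw [(List.prefix_replicate_iff.1 hp).2]
    simp
  · rcases List.prefix_cons_iff.1 hq with rfl | ⟨t, rfl, ht⟩
    · simp
    · have := excess_lt_of_prefix_flatten hws ht (by rintro rfl; simp at hne)
      simp only [excess_append, excess_cons_a, excess_replicate_b]
      omega

end IsPolishWord

namespace OSnake

/-- `OSnake.empty` is the instance `l = βs = []` of the node step, so one case suffices. -/
theorem induction_on {P : ZFSet → List AB → Prop}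
    (node : ∀ l βs, List.Forall₂ (fun S β => OSnake S β ∧ P S β) l βs →
      P (l.foldr Insert.insert ∅) (List.replicate l.length AB.b ++ [AB.a] ++ βs.flatten))
    {S : ZFSet} {α : List AB} (h : OSnake S α) : P S α :=
  OSnake.rec (motive_1 := fun S α _ => P S α)
    (motive_2 := fun l βs _ => List.Forall₂ (fun S β => OSnake S β ∧ P S β) l βs)
    (node [] [] .nil) (fun l βs _ _ _ _ ih => node l βs ih) .nil
    (fun hS _ hP ih => .cons ⟨hS, hP⟩ ih) h

theorem exists_forall₂ {S : ZFSet} {α : List AB} (h : OSnake S α) :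
    ∃ l βs, List.Forall₂ OSnake l βs ∧ S = l.foldr Insert.insert ∅ ∧
      α = List.replicate l.length AB.b ++ [AB.a] ++ βs.flatten := by
  cases h with
  | empty => exact ⟨[], [], .nil, rfl, rfl⟩
  | insert l βs _ _ hl _ => exact ⟨l, βs, hl, rfl, rfl⟩

theorem isPolishWord {S : ZFSet} {α : List AB} (h : OSnake S α) : IsPolishWord α :=
  h.induction_on (P := fun _ α => IsPolishWord α) fun l βs hl => by
    rw [hl.length_eq]
    exact IsPolishWord.replicate_append_flatten (hl.forall_mem_right fun _ _ h => h.2)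

end OSnake

theorem orderedSnake_injective (S T : ZFSet) (α : List AB)
    (hS : OSnake S α) (hT : OSnake T α) : S = T := by
  revert T
  refine hS.induction_on (P := fun S α => ∀ T, OSnake T α → S = T) fun l βs hl T hT => ?_
  obtain ⟨l', βs', hl', rfl, hα⟩ := hT.exists_forall₂
  have hβs : βs = βs' :=
    IsPolishWord.flatten_injective (hl.forall_mem_right fun _ _ h => h.1.isPolishWord)
      (hl'.forall_mem_right fun _ _ h => h.isPolishWord)
      (List.replicate_append_cons_inj AB.noConfusion (by simpa using hα)).2
  subst hβs
  rw [(hl.imp fun _ _ h => h.2).eq_of_unique_left hl']
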